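/- Define linear operators $U_1, U_2, \ldots$ on the free $\mathbb{Q}[\beta]$-module spanned by all partitions by: $U_i \cdot \mu = (-\beta)^{|\mu - e_i| - |\underline{\mu - e_i}|} \cdot \underline{\mu - e_i}$ if $\mu_i > 0$, and $U_i \cdot \mu = 0$ if $\mu_i = 0$, where for a sequence $n$, $\underline{n}$ is defined by $\underline{n}_i = \min(n_1, \ldots, n_i)$. Then the $U_i$ satisfy the reverse Knuth relations: $U_i U_k U_j = U_k U_i U_j$ for $i \ge j > k$, and $U_j U_i U_k = U_j U_k U_i$ for $i > j \ge k$. -/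

import Mathlib

open scoped Classical

/-- A partition: a finitely supported weakly decreasing sequence of natural numbers. -/
def PartitionF : Type := {f : ℕ →₀ ℕ // ∀ a b : ℕ, a ≤ b → f b ≤ f a}

/-- The size `|f| = ∑ᵢ fᵢ`. -/
def wt (f : ℕ →₀ ℕ) : ℕ := f.sum fun _ v => v

/-- `μ - e_i`: remove a box from row `i` (truncated at `0`). -/
noncomputable def remBox (i : ℕ) (f : ℕ →₀ ℕ) : ℕ →₀ ℕ := Finsupp.update f i (f i - 1)

/-- `f̲`: the prefix-minimum sequence `f̲ⱼ = min(f₀, …, fⱼ)`, the largest partition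
contained in `f` componentwise. -/
noncomputable def pbar (f : ℕ →₀ ℕ) : ℕ →₀ ℕ :=
  Finsupp.onFinset f.support
    (fun j => (Finset.range (j + 1)).inf' Finset.nonempty_range_add_one f)
    (by
      intro j hj
      simp only [Finsupp.mem_support_iff]
      intro hfj
      apply hj
      show (Finset.range (j + 1)).inf' Finset.nonempty_range_add_one f = 0
      have h1 : (Finset.range (j + 1)).inf' Finset.nonempty_range_add_one f ≤ f j :=
        Finset.inf'_le _ (Finset.self_mem_range_succ j)
      have h2 : 0 ≤ (Finset.range (j + 1)).inf' Finset.nonempty_range_add_one f := Nat.zero_le _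
      omega)

lemma pbar_anti (f : ℕ →₀ ℕ) : ∀ a b : ℕ, a ≤ b → pbar f b ≤ pbar f a := by
  intro a b hab
  simp only [pbar, Finsupp.onFinset_apply]
  obtain ⟨m, hm, hEq⟩ := Finset.exists_mem_eq_inf'
    (Finset.nonempty_range_add_one (n := a)) f
  calc (Finset.range (b + 1)).inf' Finset.nonempty_range_add_one f ≤ f m := by
        apply Finset.inf'_le
        simp only [Finset.mem_range] at hm ⊢
        omega
    _ = (Finset.range (a + 1)).inf' Finset.nonempty_range_add_one f := hEq.symm

/-- The operator `U_i` on the free `ℚ[β]`-module spanned by all partitions: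
`U_i · μ = (-β)^{|μ-e_i| - |underline(μ-e_i)|} · underline(μ-e_i)` if `μᵢ > 0`,
and `U_i · μ = 0` if `μᵢ = 0`. -/
noncomputable def Uop (i : ℕ) :
    (PartitionF →₀ Polynomial ℚ) →ₗ[Polynomial ℚ] (PartitionF →₀ Polynomial ℚ) :=
  Finsupp.lift (PartitionF →₀ Polynomial ℚ) (Polynomial ℚ) PartitionF fun p =>
    if 0 < p.1 i then
      ((-(Polynomial.X : Polynomial ℚ)) ^ (wt (remBox i p.1) - wt (pbar (remBox i p.1)))) •
        Finsupp.single (⟨pbar (remBox i p.1), pbar_anti _⟩ : PartitionF) (1 : Polynomial ℚ)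
    else 0

/-!
On a basis vector `μ`, `U_i` is either `0` or a power of `-β` times the single partition
`μ' = underline(μ - e_i)`, and that power is `|μ - e_i| - |μ'| = |μ| - 1 - |μ'|`. Along a word
of `n` operators the exponents telescope to `|μ| - n - |result|`, so two words of the same length
agree as linear maps as soon as they agree as partial maps on partitions. For those, the only
formula needed is `μ'_t = μ_t` for `t < i` and `μ'_t = min(μ_i - 1, μ_t)` for `t ≥ i`: `U_i` and
`U_k` (`k < i`) commute on `μ` when `μ_i < μ_k`, and when `μ_i = μ_k` the two orders differ but
are equalised by a subsequent `U_j` with `k ≤ j < i`.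
-/

lemma wt_eq_degree (f : ℕ →₀ ℕ) : wt f = f.degree := rfl

lemma wt_remBox_add_one {i : ℕ} {f : ℕ →₀ ℕ} (hi : 0 < f i) : wt (remBox i f) + 1 = wt f := by
  have hsplit : remBox i f + Finsupp.single i 1 = f := by
    ext j
    rcases eq_or_ne j i with rfl | hj
    · simp [remBox]
      omega
    · simp [remBox, hj]
  conv_rhs => rw [← hsplit]
  simp [wt_eq_degree]

lemma pbar_apply_le (f : ℕ →₀ ℕ) {s t : ℕ} (hst : s ≤ t) : pbar f t ≤ f s :=
  Finset.inf'_le (s := Finset.range (t + 1)) f (Finset.mem_range_succ_iff.mpr hst)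

lemma wt_pbar_le (f : ℕ →₀ ℕ) : wt (pbar f) ≤ wt f :=
  Finsupp.degree_mono fun _ => pbar_apply_le f le_rfl

lemma pbar_remBox_apply {f : ℕ →₀ ℕ} (hf : Antitone f) (i t : ℕ) :
    pbar (remBox i f) t = if i ≤ t then min (f i - 1) (f t) else f t := by
  have hrem : ∀ s, remBox i f s = if s = i then f i - 1 else f s := fun s =>
    Finsupp.update_apply f i (f i - 1) s
  apply le_antisymm
  · have hle_t : pbar (remBox i f) t ≤ f t := by
      refine (pbar_apply_le _ le_rfl).trans ?_
      rw [hrem]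
      split_ifs with h
      · subst h
        exact Nat.sub_le _ _
      · rfl
    split_ifs with hit
    · have hle_i : pbar (remBox i f) t ≤ f i - 1 := by
        have := pbar_apply_le (remBox i f) hit
        rwa [hrem, if_pos rfl] at this
      exact le_min hle_i hle_t
    · exact hle_t
  · refine Finset.le_inf' Finset.nonempty_range_add_one _ fun s hs => ?_
    have hst : s ≤ t := Finset.mem_range_succ_iff.mp hs
    have := hf hst
    rw [hrem]
    split_ifs <;> omega

noncomputable def Upart (i : ℕ) (p : PartitionF) : PartitionF :=
  ⟨pbar (remBox i p.1), pbar_anti _⟩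

lemma Upart_apply (i : ℕ) (p : PartitionF) (t : ℕ) :
    (Upart i p).1 t = if i ≤ t then min (p.1 i - 1) (p.1 t) else p.1 t :=
  pbar_remBox_apply p.2 i t

lemma wt_Upart_lt {i : ℕ} {p : PartitionF} (hi : 0 < p.1 i) : wt (Upart i p).1 < wt p.1 := by
  have := wt_remBox_add_one hi
  have := wt_pbar_le (remBox i p.1)
  simp only [Upart]
  omega

lemma PartitionF.ext {p q : PartitionF} (h : ∀ t, p.1 t = q.1 t) : p = q :=
  Subtype.ext (Finsupp.ext h)

noncomputable def Ustep (i : ℕ) (p : PartitionF) : Option PartitionF :=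
  if 0 < p.1 i then some (Upart i p) else none

lemma Ustep_of_pos {i : ℕ} {p : PartitionF} (hi : 0 < p.1 i) : Ustep i p = some (Upart i p) :=
  if_pos hi

lemma Ustep_of_eq_zero {i : ℕ} {p : PartitionF} (hi : p.1 i = 0) : Ustep i p = none :=
  if_neg (by omega)

lemma Ustep_bind_comm {i k : ℕ} {q : PartitionF} (hki : k < i) (hq : q.1 i < q.1 k) :
    (Ustep k q).bind (Ustep i) = (Ustep i q).bind (Ustep k) := by
  have hk : 0 < q.1 k := by omega
  have hk_i : (Upart k q).1 i = q.1 i := by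
    rw [Upart_apply, if_pos hki.le]
    omega
  have hi_k : (Upart i q).1 k = q.1 k := by
    rw [Upart_apply, if_neg (by omega)]
  rcases Nat.eq_zero_or_pos (q.1 i) with hi | hi
  · rw [Ustep_of_pos hk, Option.bind_some, Ustep_of_eq_zero (hk_i.trans hi),
      Ustep_of_eq_zero hi, Option.bind_none]
  · rw [Ustep_of_pos hk, Option.bind_some, Ustep_of_pos (hk_i ▸ hi), Ustep_of_pos hi,
      Option.bind_some, Ustep_of_pos (by omega)]
    congr 1
    refine PartitionF.ext fun t => ?_
    have hti : i ≤ t → q.1 t ≤ q.1 i := fun h => q.2 i t h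
    simp only [Upart_apply]
    split_ifs <;> omega

lemma Ustep_braid {i j k : ℕ} {p : PartitionF} (hkj : k ≤ j) (hji : j < i)
    (hp : p.1 i = p.1 k) :
    ((Ustep k p).bind (Ustep i)).bind (Ustep j) = ((Ustep i p).bind (Ustep k)).bind (Ustep j) := by
  have hpj : p.1 j = p.1 i := le_antisymm (hp ▸ p.2 k j hkj) (p.2 j i hji.le)
  have hki : k < i := by omega
  rcases Nat.eq_zero_or_pos (p.1 i) with h0 | hpos
  · rw [Ustep_of_eq_zero (hp ▸ h0), Ustep_of_eq_zero h0]
    rfl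
  have hk_i : (Upart k p).1 i = p.1 i - 1 := by
    rw [Upart_apply, if_pos hki.le]
    omega
  have hik_j : (Upart i (Upart k p)).1 j = p.1 i - 1 := by
    simp only [Upart_apply]
    split_ifs <;> omega
  have hi_k : (Upart i p).1 k = p.1 i := by
    rw [Upart_apply, if_neg (by omega)]
    omega
  have hki_j : (Upart k (Upart i p)).1 j = p.1 i - 1 := by
    simp only [Upart_apply]
    split_ifs <;> omega
  rw [Ustep_of_pos (hp ▸ hpos : 0 < p.1 k), Ustep_of_pos hpos, Option.bind_some,
    Option.bind_some, Ustep_of_pos (by omega : 0 < (Upart i p).1 k), Option.bind_some]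
  rcases Nat.lt_or_ge (p.1 i) 2 with hlt_two | htwo_le
  · rw [Ustep_of_eq_zero (by omega : (Upart k p).1 i = 0),
      Ustep_of_eq_zero (by omega : (Upart k (Upart i p)).1 j = 0)]
    rfl
  · rw [Ustep_of_pos (by omega : 0 < (Upart k p).1 i), Option.bind_some,
      Ustep_of_pos (by omega : 0 < (Upart i (Upart k p)).1 j),
      Ustep_of_pos (by omega : 0 < (Upart k (Upart i p)).1 j)]
    congr 1
    refine PartitionF.ext fun t => ?_
    have hti : i ≤ t → p.1 t ≤ p.1 i := fun h => p.2 i t h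
    have hkt : t ≤ i → p.1 i ≤ p.1 t := fun h => p.2 t i h
    simp only [Upart_apply]
    split_ifs <;> omega

noncomputable def Uwalk : List ℕ → PartitionF → Option PartitionF
  | [], p => some p
  | i :: l, p => (Uwalk l p).bind (Ustep i)

lemma Uwalk_knuth_left {i j k : ℕ} (hji : j ≤ i) (hkj : k < j) (p : PartitionF) :
    Uwalk [i, k, j] p = Uwalk [k, i, j] p := by
  simp only [Uwalk, Option.bind_some, Option.bind_assoc]
  rcases Nat.eq_zero_or_pos (p.1 j) with hj | hj
  · rw [Ustep_of_eq_zero hj]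
    rfl
  rw [Ustep_of_pos hj, Option.bind_some, Option.bind_some]
  refine Ustep_bind_comm (by omega) ?_
  have hjk := p.2 k j hkj.le
  rw [Upart_apply, Upart_apply, if_pos hji, if_neg (by omega)]
  omega

lemma Uwalk_knuth_right {i j k : ℕ} (hji : j < i) (hkj : k ≤ j) (p : PartitionF) :
    Uwalk [j, i, k] p = Uwalk [j, k, i] p := by
  simp only [Uwalk, Option.bind_some]
  rcases (p.2 k i (by omega)).lt_or_eq with hlt | heq
  · rw [Ustep_bind_comm (by omega) hlt]
  · exact Ustep_braid hkj hji heq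

lemma wt_add_length_le_of_Uwalk_eq_some {l : List ℕ} {p q : PartitionF}
    (h : Uwalk l p = some q) : wt q.1 + l.length ≤ wt p.1 := by
  induction l generalizing q with
  | nil => simp_all [Uwalk]
  | cons i l ih =>
    obtain ⟨r, hr, hq⟩ := Option.bind_eq_some_iff.mp h
    have hri : 0 < r.1 i := by
      by_contra h0
      simp [Ustep_of_eq_zero (Nat.eq_zero_of_not_pos h0)] at hq
    rw [Ustep_of_pos hri, Option.some_inj] at hq
    have := wt_Upart_lt hri
    have := ih hr
    subst hq
    simp only [List.length_cons]
    omega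

lemma Uop_single (i : ℕ) (p : PartitionF) (c : Polynomial ℚ) :
    Uop i (Finsupp.single p c) = (Ustep i p).elim 0 fun q =>
      (c * (-Polynomial.X) ^ (wt p.1 - 1 - wt q.1)) • Finsupp.single q 1 := by
  rw [Uop, Finsupp.lift_apply, Finsupp.sum_single_index (by simp)]
  -- `Finsupp.lift` leaves `PartitionF` unfolded in the instances, which blocks rewriting
  show c • (if 0 < p.1 i then (-Polynomial.X) ^ (wt (remBox i p.1) - wt (Upart i p).1) •
    Finsupp.single (Upart i p) (1 : Polynomial ℚ) else (0 : PartitionF →₀ Polynomial ℚ)) = _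
  split_ifs with hi
  · have := wt_remBox_add_one hi
    rw [Ustep_of_pos hi, Option.elim_some]
    refine (smul_smul _ _ _).trans ?_
    congr 3
    omega
  · rw [Ustep_of_eq_zero (by omega), smul_zero, Option.elim_none]

lemma list_prod_Uop_single (l : List ℕ) (p : PartitionF) (c : Polynomial ℚ) :
    (l.map Uop).prod (Finsupp.single p c) = (Uwalk l p).elim 0 fun q =>
      (c * (-Polynomial.X) ^ (wt p.1 - l.length - wt q.1)) • Finsupp.single q 1 := by
  induction l with
  | nil =>
    simp only [List.map_nil, List.prod_nil, Module.End.one_apply, Uwalk, Option.elim_some,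
      List.length_nil, Nat.sub_zero, Nat.sub_self, pow_zero, mul_one, Finsupp.smul_single,
      smul_eq_mul]
  | cons i l ih =>
    rw [List.map_cons, List.prod_cons, Module.End.mul_apply, ih]
    rcases hwalk : Uwalk l p with _ | q
    · simp only [Uwalk, hwalk, Option.bind_none, Option.elim_none, map_zero]
    · have hq := wt_add_length_le_of_Uwalk_eq_some hwalk
      by_cases hi : 0 < q.1 i
      · have hr := wt_Upart_lt hi
        simp only [Uwalk, hwalk, Option.bind_some, Option.elim_some, map_smul, Uop_single,
          Ustep_of_pos hi, smul_smul, List.length_cons]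
        rw [one_mul, mul_assoc, ← pow_add]
        congr 3
        omega
      · simp only [Uwalk, hwalk, Option.bind_some, Option.elim_some, Option.elim_none, map_smul,
          Uop_single, Ustep_of_eq_zero (Nat.eq_zero_of_not_pos hi), smul_zero]

lemma list_prod_Uop_eq_of_Uwalk_eq {l l' : List ℕ} (hlen : l.length = l'.length)
    (hwalk : ∀ p, Uwalk l p = Uwalk l' p) : (l.map Uop).prod = (l'.map Uop).prod :=
  Finsupp.lhom_ext fun p c => by rw [list_prod_Uop_single, list_prod_Uop_single, hwalk, hlen]

/-- The operators `U_i` satisfy the reverse Knuth relations: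
`U_i U_k U_j = U_k U_i U_j` for `i ≥ j > k`, and
`U_j U_i U_k = U_j U_k U_i` for `i > j ≥ k`. -/
theorem Uop_reverse_knuth :
    (∀ i j k : ℕ, j ≤ i → k < j →
      Uop i ∘ₗ Uop k ∘ₗ Uop j = Uop k ∘ₗ Uop i ∘ₗ Uop j) ∧
    (∀ i j k : ℕ, j < i → k ≤ j →
      Uop j ∘ₗ Uop i ∘ₗ Uop k = Uop j ∘ₗ Uop k ∘ₗ Uop i) := by
  refine ⟨fun i j k hji hkj => ?_, fun i j k hji hkj => ?_⟩
  · simpa [Module.End.mul_eq_comp] using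
      list_prod_Uop_eq_of_Uwalk_eq (l := [i, k, j]) (l' := [k, i, j]) rfl
        (Uwalk_knuth_left hji hkj)
  · simpa [Module.End.mul_eq_comp] using
      list_prod_Uop_eq_of_Uwalk_eq (l := [j, i, k]) (l' := [j, k, i]) rfl
        (Uwalk_knuth_right hji hkj)
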